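/- arXiv:0904.4557 — 5 statements merged into one kernel-verified Lean document; each statement's English description precedes it below -/
import Mathlib

section
/- For every (t,x,ξ) in R^3 satisfying ∂S/∂ξ(t,x;ξ) = 0, the Hamilton–Jacobi identity ∂S/∂t(t,x;ξ) + ∂S/∂x(t,x;ξ) - (∂S/∂x(t,x;ξ))^3 - x = 0 holds. -/
/-
With `u = ξ - x + t` one has `d/dy c(y)⁴ = (4/3) c(y)` (at `y = 0` because `c(y)⁴ = c(y) y`, elsewhere
by the inverse function rule for `y = w³`), so `∂S/∂t = ξ + t - c(u)` and `∂S/∂x = c(u)`. Since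
`c(u)³ = u`, the left-hand side becomes `ξ + t - u - x = 0`.
-/

open Filter Topology

section CubeRoot

variable {c : ℝ → ℝ}

theorem cubeRoot_zero (hc : ∀ y, c y ^ 3 = y) : c 0 = 0 :=
  pow_eq_zero_iff three_ne_zero |>.mp (hc 0)

theorem cubeRoot_ne_zero (hc : ∀ y, c y ^ 3 = y) {y : ℝ} (hy : y ≠ 0) : c y ≠ 0 :=
  fun h => hy (by rw [← hc y, h]; ring)

theorem hasDerivAt_cubeRoot {y : ℝ} (hcont : ContinuousAt c y) (hc : ∀ y, c y ^ 3 = y)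
    (hy : y ≠ 0) : HasDerivAt c (3 * c y ^ 2)⁻¹ y := by
  have hcy := cubeRoot_ne_zero hc hy
  have hcube : HasDerivAt (fun w : ℝ => w ^ 3) (3 * c y ^ 2) (c y) := by
    simpa using hasDerivAt_pow 3 (c y)
  exact hcube.of_local_left_inverse hcont (by positivity) (.of_forall hc)

theorem hasDerivAt_cubeRoot_pow_four {y : ℝ} (hcont : ContinuousAt c y)
    (hc : ∀ y, c y ^ 3 = y) : HasDerivAt (fun z => c z ^ 4) (4 / 3 * c y) y := by
  rcases eq_or_ne y 0 with rfl | hy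
  · have hc0 := cubeRoot_zero hc
    have hslope : c =ᶠ[𝓝[≠] 0] slope (fun z => c z ^ 4) 0 := by
      filter_upwards [self_mem_nhdsWithin] with z hz
      rw [slope_def_field, hc0, sub_zero, eq_div_iff hz]
      linear_combination (-c z) * hc z
    rw [hasDerivAt_iff_tendsto_slope, hc0, mul_zero]
    exact (hc0 ▸ hcont.tendsto.mono_left nhdsWithin_le_nhds).congr' hslope
  · refine ((hasDerivAt_cubeRoot hcont hc hy).pow 4).congr_deriv ?_
    have hcy := cubeRoot_ne_zero hc hy
    field_simp
    push_cast
    ring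

end CubeRoot

section GeneratingFunction

noncomputable def generatingFunction (φ : ℝ → ℝ) (t x ξ : ℝ) : ℝ :=
  1 / 2 * ξ ^ 2 + t * ξ - 3 / 4 * φ (ξ - x + t) + 1 / 2 * t ^ 2

variable {φ : ℝ → ℝ} {φ' t x ξ : ℝ}

theorem hasDerivAt_generatingFunction_time (hφ : HasDerivAt φ φ' (ξ - x + t)) :
    HasDerivAt (fun t' => generatingFunction φ t' x ξ) (ξ + t - 3 / 4 * φ') t := by
  have hu : HasDerivAt (fun t' => ξ - x + t') 1 t := (hasDerivAt_id t).const_add _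
  refine (((((hasDerivAt_id t).mul_const ξ).const_add (1 / 2 * ξ ^ 2)).sub
    ((hφ.comp t hu).const_mul (3 / 4))).add
    ((hasDerivAt_pow 2 t).const_mul (1 / 2))).congr_deriv ?_
  push_cast
  ring

theorem hasDerivAt_generatingFunction_space (hφ : HasDerivAt φ φ' (ξ - x + t)) :
    HasDerivAt (fun x' => generatingFunction φ t x' ξ) (3 / 4 * φ') x := by
  have hu : HasDerivAt (fun x' => ξ - x' + t) (-1) x :=
    ((hasDerivAt_id x).const_sub ξ).add_const t
  refine ((((hφ.comp x hu).const_mul (3 / 4)).const_sub (1 / 2 * ξ ^ 2 + t * ξ)).add_const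
    (1 / 2 * t ^ 2)).congr_deriv ?_
  ring

end GeneratingFunction

theorem generating_function_HJ_identity_general (c : ℝ → ℝ)
    (hc_cont : Continuous c)
    (hc_cube : ∀ y : ℝ, (c y) ^ 3 = y)
    (S : ℝ → ℝ → ℝ → ℝ)
    (hS : ∀ t x ξ : ℝ, S t x ξ =
      (1 / 2) * ξ ^ 2 + t * ξ - (3 / 4) * (c (ξ - x + t)) ^ 4 + (1 / 2) * t ^ 2) :
    ∀ t x ξ : ℝ, deriv (fun ξ' => S t x ξ') ξ = 0 →
      deriv (fun t' => S t' x ξ) t + deriv (fun x' => S t x' ξ) x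
        - (deriv (fun x' => S t x' ξ) x) ^ 3 - x = 0 := by
  intro t x ξ _
  obtain rfl : S = generatingFunction (fun z => c z ^ 4) := funext₃ hS
  have hφ := hasDerivAt_cubeRoot_pow_four hc_cont.continuousAt hc_cube (y := ξ - x + t)
  rw [(hasDerivAt_generatingFunction_time hφ).deriv,
    (hasDerivAt_generatingFunction_space hφ).deriv]
  linear_combination (-1 : ℝ) * hc_cube (ξ - x + t)

/-- On the critical set `∂S/∂ξ = 0`, the generating function
`S(t,x;ξ) = ½ξ² + tξ - ¾ c(ξ-x+t)⁴ + ½t²` satisfies the Hamilton–Jacobi identity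
`∂S/∂t + ∂S/∂x - (∂S/∂x)³ - x = 0`. -/
theorem generating_function_HJ_identity (c : ℝ → ℝ)
    (hc_cont : Continuous c)
    (hc_odd : ∀ y : ℝ, c (-y) = -c y)
    (hc_cube : ∀ y : ℝ, (c y) ^ 3 = y)
    (S : ℝ → ℝ → ℝ → ℝ)
    (hS : ∀ t x ξ : ℝ, S t x ξ =
      (1 / 2) * ξ ^ 2 + t * ξ - (3 / 4) * (c (ξ - x + t)) ^ 4 + (1 / 2) * t ^ 2) :
    ∀ t x ξ : ℝ, deriv (fun ξ' => S t x ξ') ξ = 0 →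
      deriv (fun t' => S t' x ξ) t + deriv (fun x' => S t x' ξ) x
        - (deriv (fun x' => S t x' ξ) x) ^ 3 - x = 0 :=
  generating_function_HJ_identity_general c hc_cont hc_cube S hS
end

section
/- For every fixed t in R, the set {(x, ∂S/∂x(t,x;ξ)) : (x,ξ) in R^2, ∂S/∂ξ(t,x;ξ) = 0} coincides with the curve {(s - s^3, s) : s in R}. That is, the Lagrangian submanifold generated by S(t,·;·) is exactly the graph {(x,p) : p - p^3 = x}. -/
/-!
At a critical point of `ξ ↦ S(t,x;ξ)` put `u = ξ - x + t` and `p = c u`: criticality says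
`p = ξ + t`, hence `x = ξ + t - u = p - p³`. Conversely the point `(s - s³, s)` is reached from
`ξ = s - t`, `x = s - s³`, where `u = s³` and `c (s³) = s` because cubing is injective.
-/

open Function

theorem setOf_exists_eq_mk_self {α β : Type*} (f : α → β) :
    {q : β × α | ∃ s, q = (f s, s)} = {q | f q.2 = q.1} := by
  ext ⟨b, a⟩
  simp only [Set.mem_ofPred_eq, Prod.mk.injEq]
  exact ⟨fun ⟨s, hb, ha⟩ => by rw [hb, ha], fun h => ⟨a, h.symm, rfl⟩⟩

theorem setOf_critical_eq_cubic_curve {R : Type*} [CommRing R] {c : R → R}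
    (hc : LeftInverse (· ^ 3) c) (hinj : Injective (fun a : R => a ^ 3)) (t : R) :
    {q : R × R | ∃ x ξ : R, ξ + t - c (ξ - x + t) = 0 ∧ q = (x, c (ξ - x + t))}
      = {q : R × R | ∃ s : R, q = (s - s ^ 3, s)} := by
  have c_pow_three : LeftInverse c (· ^ 3) := hc.rightInverse_of_injective hinj
  ext q
  constructor
  · rintro ⟨x, ξ, hcrit, rfl⟩
    have hp : c (ξ - x + t) = ξ + t := (sub_eq_zero.mp hcrit).symm
    have hp_cube : c (ξ - x + t) ^ 3 = ξ - x + t := hc _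
    refine ⟨c (ξ - x + t), Prod.ext ?_ rfl⟩
    change x = c (ξ - x + t) - c (ξ - x + t) ^ 3
    rw [hp_cube, hp]
    ring
  · rintro ⟨s, rfl⟩
    have hu : s - t - (s - s ^ 3) + t = s ^ 3 := by ring
    refine ⟨s - s ^ 3, s - t, ?_, ?_⟩
    · rw [hu, c_pow_three s]
      ring
    · rw [hu, c_pow_three s]

theorem generated_lagrangian_is_cubic_curve_general (c : ℝ → ℝ)
    (hc_cube : ∀ y : ℝ, (c y) ^ 3 = y)
    (t : ℝ) :
    {q : ℝ × ℝ | ∃ x ξ : ℝ, ξ + t - c (ξ - x + t) = 0 ∧ q = (x, c (ξ - x + t))}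
      = {q : ℝ × ℝ | ∃ s : ℝ, q = (s - s ^ 3, s)} ∧
    {q : ℝ × ℝ | ∃ s : ℝ, q = (s - s ^ 3, s)}
      = {q : ℝ × ℝ | q.2 - q.2 ^ 3 = q.1} :=
  ⟨setOf_critical_eq_cubic_curve hc_cube (Odd.pow_injective (by decide)) t,
    setOf_exists_eq_mk_self fun s : ℝ => s - s ^ 3⟩

/-- For every fixed `t`, the Lagrangian submanifold generated by `S(t,·;·)`, i.e. the set
`{(x, ∂S/∂x(t,x;ξ)) : ∂S/∂ξ(t,x;ξ) = 0}` (with `∂S/∂ξ = ξ + t - c(ξ-x+t)` and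
`∂S/∂x = c(ξ-x+t)`), coincides with the curve `{(s - s³, s) : s ∈ ℝ}`, i.e. with the
graph `{(x,p) : p - p³ = x}`. -/
theorem generated_lagrangian_is_cubic_curve (c : ℝ → ℝ)
    (hc_cont : Continuous c)
    (hc_odd : ∀ y : ℝ, c (-y) = -c y)
    (hc_cube : ∀ y : ℝ, (c y) ^ 3 = y)
    (t : ℝ) :
    {q : ℝ × ℝ | ∃ x ξ : ℝ, ξ + t - c (ξ - x + t) = 0 ∧ q = (x, c (ξ - x + t))}
      = {q : ℝ × ℝ | ∃ s : ℝ, q = (s - s ^ 3, s)} ∧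
    {q : ℝ × ℝ | ∃ s : ℝ, q = (s - s ^ 3, s)}
      = {q : ℝ × ℝ | q.2 - q.2 ^ 3 = q.1} :=
  generated_lagrangian_is_cubic_curve_general c hc_cube t
end

section
/- The function m is differentiable at every x < 0 with m'(x) = v^+(x), and differentiable at every x > 0 with m'(x) = v^-(x). -/
/-! Substituting `s = x + w³` turns the cost into the polynomial `½(x + w³)² - ¾w⁴` in `w`.
For `x = v - v³` with `v ≥ 1` its minimum is attained at `w = v`, so `m(v - v³) = ½v² - ¾v⁴`
for `v ≥ 1`. Around `v⁺(x) > 1` the map `v ↦ v - v³` is a local diffeomorphism, and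
differentiating this identity gives `m'(x) (1 - 3v²) = v (1 - 3v²)`. The case `x > 0` follows
because `m` is even. -/

open Filter Topology

theorem HasStrictDerivAt.hasDerivAt_of_comp_eventuallyEq {𝕜 : Type*} [NontriviallyNormedField 𝕜]
    [CompleteSpace 𝕜] {f g p : 𝕜 → 𝕜} {p' g' a : 𝕜} (hp : HasStrictDerivAt p p' a) (hp' : p' ≠ 0)
    (hg : HasDerivAt g g' a) (hfg : ∀ᶠ x in 𝓝 a, f (p x) = g x) :
    HasDerivAt f (g' / p') (p a) := by
  set φ := hp.localInverse p p' a hp'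
  have hφp : ∀ᶠ x in 𝓝 a, φ (p x) = x := hp.eventually_left_inverse hp'
  have hf : ∀ᶠ y in 𝓝 (p a), f y = g (φ y) := by
    rw [← hp.map_nhds_eq hp', eventually_map]
    filter_upwards [hφp, hfg] with x hx hfx
    rw [hx, hfx]
  have hg' : HasDerivAt g g' (φ (p a)) := by rwa [hφp.self_of_nhds]
  rw [div_eq_mul_inv]
  exact (hg'.comp (p a) (hp.to_localInverse hp').hasDerivAt).congr_of_eventuallyEq hf

theorem exists_pow_three_eq (t : ℝ) : ∃ w : ℝ, w ^ 3 = t := by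
  have hcube : (|t| ^ ((3 : ℕ) : ℝ)⁻¹) ^ 3 = |t| :=
    Real.rpow_inv_natCast_pow (abs_nonneg t) three_ne_zero
  rcases abs_choice t with ht | ht
  · exact ⟨_, hcube.trans ht⟩
  · exact ⟨-(|t| ^ ((3 : ℕ) : ℝ)⁻¹), by rw [neg_pow, hcube, ht]; ring⟩

theorem abs_pow_three_rpow_four_thirds (w : ℝ) : |w ^ 3| ^ ((4 : ℝ) / 3) = w ^ 4 := by
  rw [abs_pow, ← Real.rpow_natCast_mul (abs_nonneg w), ← (by decide : Even 4).pow_abs w,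
    ← Real.rpow_natCast]
  norm_num

theorem sextic_lower_bound {v : ℝ} (hv : 1 ≤ v) (w : ℝ) :
    (1 / 2) * v ^ 2 - (3 / 4) * v ^ 4 ≤ (1 / 2) * (w ^ 3 + (v - v ^ 3)) ^ 2 - (3 / 4) * w ^ 4 := by
  -- the difference is `(w - v)² Q / 4`, with `Q` the quartic below
  have hQ : 0 ≤ 2 * w ^ 4 + 4 * v * w ^ 3 + (6 * v ^ 2 - 3) * w ^ 2 + (4 * v ^ 3 - 2 * v) * w
      + 2 * v ^ 4 - v ^ 2 := by
    nlinarith [sq_nonneg (w ^ 2 + v * w + v ^ 2 - 3 / 4), sq_nonneg (w + v), sq_nonneg (v * w + 1),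
      sq_nonneg (w + 1), sq_nonneg (v - 1), sq_nonneg (v * w + v ^ 2),
      mul_nonneg (sub_nonneg.2 hv) (sq_nonneg (w + 1)), sq_nonneg (w ^ 2 + v * w)]
  nlinarith [mul_nonneg (sq_nonneg (w - v)) hQ]

noncomputable def cost (x s : ℝ) : ℝ := (1 / 2) * s ^ 2 - (3 / 4) * |s - x| ^ ((4 : ℝ) / 3)

theorem cost_neg (x s : ℝ) : cost (-x) (-s) = cost x s := by
  rw [cost, cost, neg_sq, ← abs_neg]
  ring_nf

theorem cost_cube_add (x w : ℝ) :
    cost x (w ^ 3 + x) = (1 / 2) * (w ^ 3 + x) ^ 2 - (3 / 4) * w ^ 4 := by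
  rw [cost, add_sub_cancel_right, abs_pow_three_rpow_four_thirds]

theorem iInf_cost_neg (x : ℝ) : ⨅ s, cost (-x) s = ⨅ s, cost x s :=
  (neg_surjective.iInf_congr _ (cost_neg x)).symm

theorem iInf_cost_eq {v : ℝ} (hv : 1 ≤ v) :
    ⨅ s, cost (v - v ^ 3) s = (1 / 2) * v ^ 2 - (3 / 4) * v ^ 4 := by
  have hlower : ∀ s, (1 / 2) * v ^ 2 - (3 / 4) * v ^ 4 ≤ cost (v - v ^ 3) s := by
    intro s
    obtain ⟨w, hw⟩ := exists_pow_three_eq (s - (v - v ^ 3))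
    rw [← sub_add_cancel s (v - v ^ 3), ← hw, cost_cube_add]
    exact sextic_lower_bound hv w
  have hattained : cost (v - v ^ 3) v = (1 / 2) * v ^ 2 - (3 / 4) * v ^ 4 := by
    have h := cost_cube_add (v - v ^ 3) v
    rwa [add_sub_cancel] at h
  exact le_antisymm ((ciInf_le ⟨_, Set.forall_mem_range.2 hlower⟩ v).trans_eq hattained)
    (le_ciInf hlower)

theorem hasDerivAt_iInf_cost_of_one_lt {v : ℝ} (hv : 1 < v) :
    HasDerivAt (fun x => ⨅ s, cost x s) v (v - v ^ 3) := by
  have hp : HasStrictDerivAt (fun u : ℝ => u - u ^ 3) (1 - 3 * v ^ 2) v := by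
    simpa using (hasStrictDerivAt_id v).fun_sub (hasStrictDerivAt_pow 3 v)
  have hg : HasDerivAt (fun u : ℝ => (1 / 2) * u ^ 2 - (3 / 4) * u ^ 4) (v * (1 - 3 * v ^ 2)) v :=
    ((hasDerivAt_pow 2 v).const_mul (1 / 2)).fun_sub ((hasDerivAt_pow 4 v).const_mul (3 / 4))
      |>.congr_deriv (by norm_num; ring)
  have hfg : ∀ᶠ u in 𝓝 v, ⨅ s, cost (u - u ^ 3) s = (1 / 2) * u ^ 2 - (3 / 4) * u ^ 4 :=
    eventually_of_mem (Ici_mem_nhds hv) fun u hu => iInf_cost_eq hu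
  have hp' : (1 - 3 * v ^ 2 : ℝ) ≠ 0 := by nlinarith
  simpa only [mul_div_cancel_right₀ v hp'] using hp.hasDerivAt_of_comp_eventuallyEq hp' hg hfg

theorem hasDerivAt_iInf_cost_of_lt_neg_one {v : ℝ} (hv : v < -1) :
    HasDerivAt (fun x => ⨅ s, cost x s) v (v - v ^ 3) := by
  have h := hasDerivAt_iInf_cost_of_one_lt (by linarith : 1 < -v)
  rw [show -v - (-v) ^ 3 = -(v - v ^ 3) by ring] at h
  have := h.comp (v - v ^ 3) (hasDerivAt_neg (v - v ^ 3))
  simpa only [Function.comp_def, iInf_cost_neg, mul_neg, mul_one, neg_neg] using this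

theorem one_lt_of_sub_pow_three_neg {v : ℝ} (hv : 0 < v) (h : v - v ^ 3 < 0) : 1 < v := by
  by_contra! hv1
  nlinarith [mul_nonneg (mul_nonneg hv.le (sub_nonneg.2 hv1)) (by linarith : (0 : ℝ) ≤ 1 + v)]

/-- The variational solution `m(x) = inf_s [½s² - ¾|s-x|^{4/3}]` is differentiable at
every `x < 0` with `m'(x) = v⁺(x)` (the unique positive root of `v - v³ = x`), and at
every `x > 0` with `m'(x) = v⁻(x)` (the unique negative root). -/
theorem m_differentiable_off_zero :
    let m : ℝ → ℝ := fun x =>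
      ⨅ s : ℝ, ((1 / 2) * s ^ 2 - (3 / 4) * |s - x| ^ ((4 : ℝ) / 3))
    (∀ x : ℝ, x < 0 → ∀ v : ℝ, 0 < v → v - v ^ 3 = x → HasDerivAt m v x) ∧
    (∀ x : ℝ, 0 < x → ∀ v : ℝ, v < 0 → v - v ^ 3 = x → HasDerivAt m v x) := by
  refine ⟨fun x hx v hv hvx => ?_, fun x hx v hv hvx => ?_⟩
  · subst hvx
    exact hasDerivAt_iInf_cost_of_one_lt (one_lt_of_sub_pow_three_neg hv hx)
  · subst hvx
    have hv1 : 1 < -v := one_lt_of_sub_pow_three_neg (neg_pos.2 hv) (by linarith)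
    exact hasDerivAt_iInf_cost_of_lt_neg_one (by linarith)
end

section
/- The function m has left derivative equal to 1 and right derivative equal to -1 at x = 0. Consequently the superdifferential of m at 0 equals the interval [-1, 1] and the subdifferential of m at 0 is empty; in particular m is not differentiable at 0. -/
/-!
Young's inequality `(3/4) t^{4/3} ≤ t²/(2c) + c²/4` with the constant `c = 1 + |x|`, together with
`(s - x)² ≤ (1 + |x|)(s² + |x|)`, bounds the integrand from below by `-1/4 - |x| - x²/4`, while the
choice `s = ∓1` and Bernoulli's inequality bound the infimum from above by `-1/4 - |x|`. Hence
`m x = -1/4 - |x| + O(x²)`, so `m` has the one-sided derivatives of `-|x|`. For any function with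
left derivative `a` and right derivative `b` at `x₀`, the normalized increment
`(f x - f x₀ - q (x - x₀)) / |x - x₀|` tends to `q - a` from the left and to `b - q` from the right,
which identifies the superdifferential with `[b, a]` and the subdifferential with `[a, b]`.
-/

open Filter Topology Set Asymptotics

section OneSidedDerivatives

variable {f : ℝ → ℝ} {x₀ a b : ℝ}

def superdifferential (f : ℝ → ℝ) (x₀ : ℝ) : Set ℝ :=
  {q | ∀ ε : ℝ, 0 < ε → ∀ᶠ x in 𝓝[≠] x₀, (f x - f x₀ - q * (x - x₀)) / |x - x₀| ≤ ε}

def subdifferential (f : ℝ → ℝ) (x₀ : ℝ) : Set ℝ :=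
  {q | ∀ ε : ℝ, 0 < ε → ∀ᶠ x in 𝓝[≠] x₀, -ε ≤ (f x - f x₀ - q * (x - x₀)) / |x - x₀|}

lemma forall_eventually_le_iff_of_tendsto {α : Type*} {l : Filter α} [l.NeBot] {φ : α → ℝ}
    {L : ℝ} (hφ : Tendsto φ l (𝓝 L)) : (∀ ε : ℝ, 0 < ε → ∀ᶠ x in l, φ x ≤ ε) ↔ L ≤ 0 := by
  refine ⟨fun h => ?_, fun hL ε hε => (hφ.eventually_lt_const (by linarith)).mono fun _ => le_of_lt⟩
  by_contra! hL
  obtain ⟨x, hx_le, hx_gt⟩ := ((h (L / 2) (by linarith)).and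
    (hφ.eventually_const_lt (by linarith : L / 2 < L))).exists
  linarith

lemma forall_eventually_ge_iff_of_tendsto {α : Type*} {l : Filter α} [l.NeBot] {φ : α → ℝ}
    {L : ℝ} (hφ : Tendsto φ l (𝓝 L)) : (∀ ε : ℝ, 0 < ε → ∀ᶠ x in l, -ε ≤ φ x) ↔ 0 ≤ L := by
  simpa [neg_le] using forall_eventually_le_iff_of_tendsto hφ.neg

lemma HasDerivWithinAt.tendsto_increment_div_abs_nhdsLT (ha : HasDerivWithinAt f a (Iic x₀) x₀)
    (q : ℝ) :
    Tendsto (fun x => (f x - f x₀ - q * (x - x₀)) / |x - x₀|) (𝓝[<] x₀) (𝓝 (q - a)) := by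
  rw [hasDerivWithinAt_iff_tendsto_slope, Iic_sdiff_right] at ha
  refine ((tendsto_const_nhds (x := q)).sub ha).congr' ?_
  filter_upwards [self_mem_nhdsWithin] with x (hx : x < x₀)
  have hne : x - x₀ ≠ 0 := (sub_neg.2 hx).ne
  rw [slope_def_field, abs_of_neg (sub_neg.2 hx)]
  field_simp
  ring

lemma HasDerivWithinAt.tendsto_increment_div_abs_nhdsGT (hb : HasDerivWithinAt f b (Ici x₀) x₀)
    (q : ℝ) :
    Tendsto (fun x => (f x - f x₀ - q * (x - x₀)) / |x - x₀|) (𝓝[>] x₀) (𝓝 (b - q)) := by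
  rw [hasDerivWithinAt_iff_tendsto_slope, Ici_sdiff_left] at hb
  refine (hb.sub (tendsto_const_nhds (x := q))).congr' ?_
  filter_upwards [self_mem_nhdsWithin] with x (hx : x₀ < x)
  have hne : x - x₀ ≠ 0 := (sub_pos.2 hx).ne'
  rw [slope_def_field, abs_of_pos (sub_pos.2 hx)]
  field_simp

lemma superdifferential_eq_Icc (ha : HasDerivWithinAt f a (Iic x₀) x₀)
    (hb : HasDerivWithinAt f b (Ici x₀) x₀) : superdifferential f x₀ = Icc b a := by
  ext q
  simp only [superdifferential, mem_ofPred_eq, ← nhdsLT_sup_nhdsGT, eventually_sup, forall_and,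
    forall_eventually_le_iff_of_tendsto (ha.tendsto_increment_div_abs_nhdsLT q),
    forall_eventually_le_iff_of_tendsto (hb.tendsto_increment_div_abs_nhdsGT q), mem_Icc]
  constructor <;> rintro ⟨h₁, h₂⟩ <;> constructor <;> linarith

lemma subdifferential_eq_Icc (ha : HasDerivWithinAt f a (Iic x₀) x₀)
    (hb : HasDerivWithinAt f b (Ici x₀) x₀) : subdifferential f x₀ = Icc a b := by
  ext q
  simp only [subdifferential, mem_ofPred_eq, ← nhdsLT_sup_nhdsGT, eventually_sup, forall_and,
    forall_eventually_ge_iff_of_tendsto (ha.tendsto_increment_div_abs_nhdsLT q),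
    forall_eventually_ge_iff_of_tendsto (hb.tendsto_increment_div_abs_nhdsGT q), mem_Icc]
  constructor <;> rintro ⟨h₁, h₂⟩ <;> constructor <;> linarith

lemma not_differentiableAt_of_hasDerivWithinAt_Iic_Ici (ha : HasDerivWithinAt f a (Iic x₀) x₀)
    (hb : HasDerivWithinAt f b (Ici x₀) x₀) (hab : a ≠ b) : ¬ DifferentiableAt ℝ f x₀ := by
  intro hf
  have hfa := (uniqueDiffOn_Iic x₀ x₀ self_mem_Iic).eq_deriv _ ha hf.hasDerivAt.hasDerivWithinAt
  have hfb := (uniqueDiffOn_Ici x₀ x₀ self_mem_Ici).eq_deriv _ hb hf.hasDerivAt.hasDerivWithinAt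
  exact hab (hfa.trans hfb.symm)

end OneSidedDerivatives

lemma hasDerivWithinAt_abs_Iic_zero : HasDerivWithinAt (|·|) (-1) (Iic 0) (0 : ℝ) :=
  (hasDerivWithinAt_neg 0 (Iic 0)).congr (fun _ hx => abs_of_nonpos hx) (by simp)

lemma hasDerivWithinAt_abs_Ici_zero : HasDerivWithinAt (|·|) 1 (Ici 0) (0 : ℝ) :=
  (hasDerivWithinAt_id 0 (Ici 0)).congr (fun _ hx => abs_of_nonneg hx) abs_zero

/-- Young's inequality with exponents `3/2` and `3`. -/
lemma three_div_four_mul_rpow_four_div_three_le {t c : ℝ} (ht : 0 ≤ t) (hc : 0 < c) :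
    3 / 4 * t ^ ((4 : ℝ) / 3) ≤ t ^ 2 / (2 * c) + c ^ 2 / 4 := by
  set v := t ^ ((2 : ℝ) / 3) with hv
  have hv2 : t ^ ((4 : ℝ) / 3) = v ^ 2 := by
    rw [hv, ← Real.rpow_mul_natCast ht]; norm_num
  have hv3 : t ^ 2 = v ^ 3 := by
    rw [hv, ← Real.rpow_mul_natCast ht]; norm_num
  rw [hv2, hv3, div_add_div _ _ (by positivity) (by positivity), le_div_iff₀ (by positivity)]
  -- `2 w³ - 3 w² + 1 = (w - 1)² (2 w + 1)` with `w = v / c`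
  nlinarith [mul_nonneg (sq_nonneg (v - c)) (by positivity : 0 ≤ 2 * v + c)]

noncomputable def minmaxIntegrand (x s : ℝ) : ℝ :=
  (1 / 2) * s ^ 2 - (3 / 4) * |s - x| ^ ((4 : ℝ) / 3)

noncomputable def minmaxSolution (x : ℝ) : ℝ :=
  ⨅ s : ℝ, minmaxIntegrand x s

lemma le_minmaxIntegrand (x s : ℝ) : -1 / 4 - |x| - x ^ 2 / 4 ≤ minmaxIntegrand x s := by
  have hc : 0 < 1 + |x| := by positivity
  have hyoung := three_div_four_mul_rpow_four_div_three_le (abs_nonneg (s - x)) hc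
  have hsq : (s - x) ^ 2 ≤ (1 + |x|) * (s ^ 2 + |x|) := by
    nlinarith [sq_abs x, sq_abs s, abs_mul s x, neg_abs_le (s * x),
      mul_nonneg (abs_nonneg x) (sq_nonneg (|s| - 1))]
  have hdiv : (s - x) ^ 2 / (2 * (1 + |x|)) ≤ (s ^ 2 + |x|) / 2 := by
    rw [div_le_div_iff₀ (by positivity) (by positivity)]; nlinarith
  rw [sq_abs] at hyoung
  unfold minmaxIntegrand
  nlinarith [sq_abs x]

lemma bddBelow_range_minmaxIntegrand (x : ℝ) : BddBelow (range (minmaxIntegrand x)) :=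
  ⟨_, forall_mem_range.2 (le_minmaxIntegrand x)⟩

lemma le_minmaxSolution (x : ℝ) : -1 / 4 - |x| - x ^ 2 / 4 ≤ minmaxSolution x :=
  le_ciInf (le_minmaxIntegrand x)

lemma minmaxSolution_le (x : ℝ) : minmaxSolution x ≤ -1 / 4 - |x| := by
  obtain ⟨s, hs, hsx⟩ : ∃ s : ℝ, s ^ 2 = 1 ∧ |s - x| = 1 + |x| := by
    rcases le_or_gt 0 x with hx | hx
    · exact ⟨-1, by norm_num, by rw [abs_of_nonneg hx, abs_of_nonpos (by linarith)]; ring⟩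
    · exact ⟨1, by norm_num, by rw [abs_of_neg hx, abs_of_pos (by linarith)]; ring⟩
  have hbernoulli := one_add_mul_self_le_rpow_one_add (by linarith [abs_nonneg x] : -1 ≤ |x|)
    (by norm_num : (1 : ℝ) ≤ 4 / 3)
  calc minmaxSolution x ≤ minmaxIntegrand x s := ciInf_le (bddBelow_range_minmaxIntegrand x) s
    _ ≤ -1 / 4 - |x| := by rw [minmaxIntegrand, hs, hsx]; linarith

lemma minmaxSolution_zero : minmaxSolution 0 = -1 / 4 :=
  le_antisymm (by simpa using minmaxSolution_le 0) (by simpa using le_minmaxSolution 0)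

lemma hasDerivAt_minmaxSolution_add_abs :
    HasDerivAt (fun x => minmaxSolution x + |x|) 0 0 := by
  have hO : (fun x => minmaxSolution x + |x| - minmaxSolution 0) =O[𝓝 0]
      fun x : ℝ => ‖x - 0‖ ^ 2 := by
    refine IsBigO.of_bound (1 / 4) (Eventually.of_forall fun x => ?_)
    have h₁ := le_minmaxSolution x
    have h₂ := minmaxSolution_le x
    rw [minmaxSolution_zero]
    simp only [sub_zero, norm_pow, Real.norm_eq_abs, sq_abs, abs_le]
    constructor <;> linarith
  simpa using ((hO.hasFDerivAt one_lt_two).hasDerivAt).add_const (minmaxSolution 0)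

lemma hasDerivWithinAt_minmaxSolution_Iic : HasDerivWithinAt minmaxSolution 1 (Iic 0) 0 := by
  simpa [Pi.sub_def] using
    hasDerivAt_minmaxSolution_add_abs.hasDerivWithinAt.sub hasDerivWithinAt_abs_Iic_zero

lemma hasDerivWithinAt_minmaxSolution_Ici : HasDerivWithinAt minmaxSolution (-1) (Ici 0) 0 := by
  simpa [Pi.sub_def] using
    hasDerivAt_minmaxSolution_add_abs.hasDerivWithinAt.sub hasDerivWithinAt_abs_Ici_zero


/-- `m` has left derivative `1` and right derivative `-1` at `0`; its superdifferential
at `0` (the set of `q` with `limsup_{x→0} (m x - m 0 - q x)/|x| ≤ 0`) equals `[-1,1]`,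
its subdifferential at `0` is empty, and `m` is not differentiable at `0`. -/
theorem m_not_differentiable_at_zero :
    let m : ℝ → ℝ := fun x =>
      ⨅ s : ℝ, ((1 / 2) * s ^ 2 - (3 / 4) * |s - x| ^ ((4 : ℝ) / 3))
    HasDerivWithinAt m 1 (Set.Iic 0) 0 ∧
    HasDerivWithinAt m (-1) (Set.Ici 0) 0 ∧
    {q : ℝ | ∀ ε : ℝ, 0 < ε →
        ∀ᶠ x in 𝓝[≠] (0 : ℝ), (m x - m 0 - q * (x - 0)) / |x - 0| ≤ ε}
      = Set.Icc (-1 : ℝ) 1 ∧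
    {q : ℝ | ∀ ε : ℝ, 0 < ε →
        ∀ᶠ x in 𝓝[≠] (0 : ℝ), -ε ≤ (m x - m 0 - q * (x - 0)) / |x - 0|}
      = (∅ : Set ℝ) ∧
    ¬ DifferentiableAt ℝ m 0 := by
  intro m
  have hL : HasDerivWithinAt m 1 (Iic 0) 0 := hasDerivWithinAt_minmaxSolution_Iic
  have hR : HasDerivWithinAt m (-1) (Ici 0) 0 := hasDerivWithinAt_minmaxSolution_Ici
  exact ⟨hL, hR, superdifferential_eq_Icc hL hR,
    (subdifferential_eq_Icc hL hR).trans (Icc_eq_empty (by norm_num)),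
    not_differentiableAt_of_hasDerivWithinAt_Iic_Ici hL hR (by norm_num)⟩
end

section
/- Composition rule for generating functions: let S, F : R^k x R^k → R be differentiable and let φ, ψ : R^k x R^k → R^k x R^k be bijections such that for all points, φ(Q,P) = (q,p) if and only if P = -∇_Q S(Q,q) and p = ∇_q S(Q,q), and ψ(X,Y) = (x,y) if and only if Y = -∇_X F(X,x) and y = ∇_x F(X,x). Define G(Q,x;w) := S(Q,w) + F(w,x). Then for all (Q,P) and (x,y): (ψ ∘ φ)(Q,P) = (x,y) if and only if there exists w in R^k with ∇_w G(Q,x;w) = 0, P = -∇_Q G(Q,x;w), and y = ∇_x G(Q,x;w). -/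
/-!
If `φ(Q, P) = (w, p)` and `ψ(w, p) = (x, y)`, the momentum `p` appears twice: once as
`∇_w S(Q, w)` and once as `-∇_w F(w, x)`. Eliminating it leaves exactly the stationarity
condition `∇_w (S(Q, w) + F(w, x)) = 0`, and the remaining equations for `P` and `y` only see
the summand of `G` that depends on `Q`, respectively `x`.
-/

open scoped Gradient

section Gradient

variable {E : Type*} [NormedAddCommGroup E] [InnerProductSpace ℝ E] [CompleteSpace E]
  {f g : E → ℝ} {x : E}

theorem gradient_add (hf : DifferentiableAt ℝ f x) (hg : DifferentiableAt ℝ g x) :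
    ∇ (fun y => f y + g y) x = ∇ f x + ∇ g x := by
  simp only [gradient, fderiv_fun_add hf hg, map_add]

theorem gradient_add_const (c : ℝ) : ∇ (fun y => f y + c) x = ∇ f x := by
  simp only [gradient, fderiv_add_const]

theorem gradient_const_add (c : ℝ) : ∇ (fun y => c + f y) x = ∇ f x := by
  simp only [gradient, fderiv_const_add]

end Gradient

section Curry

variable {E F G : Type*} [NormedAddCommGroup E] [NormedSpace ℝ E] [NormedAddCommGroup F]
  [NormedSpace ℝ F] [NormedAddCommGroup G] [NormedSpace ℝ G] {f : E → F → G}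

theorem Differentiable.curry_fst (hf : Differentiable ℝ fun p : E × F => f p.1 p.2) (y : F) :
    Differentiable ℝ fun x => f x y :=
  hf.comp (differentiable_id.prodMk (differentiable_const y))

theorem Differentiable.curry_snd (hf : Differentiable ℝ fun p : E × F => f p.1 p.2) (x : E) :
    Differentiable ℝ (f x) :=
  hf.comp ((differentiable_const x).prodMk differentiable_id)

end Curry

section GeneratingFunction

variable {E : Type*} [NormedAddCommGroup E] [InnerProductSpace ℝ E] [CompleteSpace E]

def IsGeneratingFunction (S : E → E → ℝ) (φ : E × E → E × E) : Prop :=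
  ∀ Q P q p : E, φ (Q, P) = (q, p) ↔
    (P = -∇ (fun Q' => S Q' q) Q ∧ p = ∇ (fun q' => S Q q') q)

theorem IsGeneratingFunction.comp_apply_eq_iff {S F : E → E → ℝ} {φ ψ : E × E → E × E}
    (hφ : IsGeneratingFunction S φ) (hψ : IsGeneratingFunction F ψ) (Q P x y : E) :
    ψ (φ (Q, P)) = (x, y) ↔ ∃ w : E,
      ∇ (S Q) w + ∇ (fun w' => F w' x) w = 0 ∧
      P = -∇ (fun Q' => S Q' w) Q ∧ y = ∇ (fun x' => F w x') x := by
  constructor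
  · intro h
    obtain ⟨⟨w, p⟩, hwp⟩ : ∃ c, φ (Q, P) = c := ⟨_, rfl⟩
    rw [hwp] at h
    obtain ⟨hP, hp⟩ := (hφ Q P w p).1 hwp
    obtain ⟨hp', hy⟩ := (hψ w p x y).1 h
    refine ⟨w, ?_, hP, hy⟩
    rw [← hp, hp', neg_add_cancel]
  · rintro ⟨w, hstat, hP, hy⟩
    rw [(hφ Q P w _).2 ⟨hP, rfl⟩]
    exact (hψ w _ x y).2 ⟨eq_neg_of_add_eq_zero_left hstat, hy⟩

end GeneratingFunction

theorem composition_rule_generating_functions_general {k : ℕ}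
    (S F : EuclideanSpace ℝ (Fin k) → EuclideanSpace ℝ (Fin k) → ℝ)
    (hSdiff : Differentiable ℝ
      (fun q : EuclideanSpace ℝ (Fin k) × EuclideanSpace ℝ (Fin k) => S q.1 q.2))
    (hFdiff : Differentiable ℝ
      (fun q : EuclideanSpace ℝ (Fin k) × EuclideanSpace ℝ (Fin k) => F q.1 q.2))
    (φ ψ : EuclideanSpace ℝ (Fin k) × EuclideanSpace ℝ (Fin k) →
      EuclideanSpace ℝ (Fin k) × EuclideanSpace ℝ (Fin k))
    (hφ : ∀ Q P q p : EuclideanSpace ℝ (Fin k), φ (Q, P) = (q, p) ↔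
      (P = -gradient (fun Q' => S Q' q) Q ∧ p = gradient (fun q' => S Q q') q))
    (hψ : ∀ X Y x y : EuclideanSpace ℝ (Fin k), ψ (X, Y) = (x, y) ↔
      (Y = -gradient (fun X' => F X' x) X ∧ y = gradient (fun x' => F X x') x)) :
    ∀ Q P x y : EuclideanSpace ℝ (Fin k), (ψ ∘ φ) (Q, P) = (x, y) ↔
      ∃ w : EuclideanSpace ℝ (Fin k),
        gradient (fun w' => S Q w' + F w' x) w = 0 ∧
        P = -gradient (fun Q' => S Q' w + F w x) Q ∧
        y = gradient (fun x' => S Q w + F w x') x := by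
  intro Q P x y
  have hsplit : ∀ w, ∇ (fun w' => S Q w' + F w' x) w = ∇ (S Q) w + ∇ (fun w' => F w' x) w :=
    fun w => gradient_add ((hSdiff.curry_snd Q).differentiableAt)
      ((hFdiff.curry_fst x).differentiableAt)
  simp only [Function.comp_apply, hsplit, gradient_add_const, gradient_const_add]
  exact IsGeneratingFunction.comp_apply_eq_iff hφ hψ Q P x y

/-- Composition rule for generating functions: if `S` generates the canonical
transformation `φ` and `F` generates `ψ`, then `G(Q,x;w) = S(Q,w) + F(w,x)` generates
`ψ ∘ φ`, the extra variable `w` playing the role of a parameter to be stationarized. -/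
theorem composition_rule_generating_functions {k : ℕ}
    (S F : EuclideanSpace ℝ (Fin k) → EuclideanSpace ℝ (Fin k) → ℝ)
    (hSdiff : Differentiable ℝ
      (fun q : EuclideanSpace ℝ (Fin k) × EuclideanSpace ℝ (Fin k) => S q.1 q.2))
    (hFdiff : Differentiable ℝ
      (fun q : EuclideanSpace ℝ (Fin k) × EuclideanSpace ℝ (Fin k) => F q.1 q.2))
    (φ ψ : EuclideanSpace ℝ (Fin k) × EuclideanSpace ℝ (Fin k) →
      EuclideanSpace ℝ (Fin k) × EuclideanSpace ℝ (Fin k))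
    (hφbij : Function.Bijective φ) (hψbij : Function.Bijective ψ)
    (hφ : ∀ Q P q p : EuclideanSpace ℝ (Fin k), φ (Q, P) = (q, p) ↔
      (P = -gradient (fun Q' => S Q' q) Q ∧ p = gradient (fun q' => S Q q') q))
    (hψ : ∀ X Y x y : EuclideanSpace ℝ (Fin k), ψ (X, Y) = (x, y) ↔
      (Y = -gradient (fun X' => F X' x) X ∧ y = gradient (fun x' => F X x') x)) :
    ∀ Q P x y : EuclideanSpace ℝ (Fin k), (ψ ∘ φ) (Q, P) = (x, y) ↔
      ∃ w : EuclideanSpace ℝ (Fin k),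
        gradient (fun w' => S Q w' + F w' x) w = 0 ∧
        P = -gradient (fun Q' => S Q' w + F w x) Q ∧
        y = gradient (fun x' => S Q w + F w x') x :=
  composition_rule_generating_functions_general S F hSdiff hFdiff φ ψ hφ hψ
end
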